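/- arXiv:2003.09358 — 2 statements merged into one kernel-verified Lean document; each statement's English description precedes it below -/
import Mathlib

section
/- Define L(t,x) = tanh(x)·cos(t) and M(t,x) = sin(t). Then (L, M) satisfies the linearized Bäcklund system around the sine-Gordon kink: for all (t,x) ∈ ℝ², ∂_x L(t,x) − ∂_t M(t,x) = −tanh(x)·L(t,x) and ∂_t L(t,x) − ∂_x M(t,x) = −tanh(x)·M(t,x). (The odd resonance L of the kink and the resonance M of the vacuum are linked by the linearized Bäcklund transformation.) -/
/-- The odd resonance of sine-Gordon around the kink. -/
noncomputable def resL (t x : ℝ) : ℝ := Real.tanh x * Real.cos t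

/-- The resonance of sine-Gordon around the vacuum. -/
noncomputable def resM (t _x : ℝ) : ℝ := Real.sin t

namespace Real

theorem hasDerivAt_tanh (x : ℝ) : HasDerivAt tanh (1 - tanh x ^ 2) x := by
  have hquot : HasDerivAt (fun y => sinh y / cosh y)
      ((cosh x * cosh x - sinh x * sinh x) / cosh x ^ 2) x :=
    (hasDerivAt_sinh x).div (hasDerivAt_cosh x) (cosh_pos x).ne'
  have hcosh : cosh x ≠ 0 := (cosh_pos x).ne'
  convert hquot using 1
  · exact funext tanh_eq_sinh_div_cosh
  · rw [tanh_eq_sinh_div_cosh]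
    field_simp

end Real

theorem hasDerivAt_resL_space (t x : ℝ) :
    HasDerivAt (fun x' => resL t x') ((1 - Real.tanh x ^ 2) * Real.cos t) x :=
  (Real.hasDerivAt_tanh x).mul_const _

theorem hasDerivAt_resL_time (t x : ℝ) :
    HasDerivAt (fun t' => resL t' x) (Real.tanh x * -Real.sin t) t :=
  (Real.hasDerivAt_cos t).const_mul _

theorem deriv_resM_time (t x : ℝ) : deriv (fun t' => resM t' x) t = Real.cos t :=
  (Real.hasDerivAt_sin t).deriv

theorem deriv_resM_space (t x : ℝ) : deriv (fun x' => resM t x') x = 0 :=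
  deriv_const x _

/-- The pair (L, M) = (tanh x · cos t, sin t) satisfies the linearized
Bäcklund system around the sine-Gordon kink. -/
theorem resonances_satisfy_linearized_backlund :
    ∀ t x : ℝ,
      deriv (fun x' => resL t x') x - deriv (fun t' => resM t' x) t
        = -Real.tanh x * resL t x
      ∧ deriv (fun t' => resL t' x) t - deriv (fun x' => resM t x') x
        = -Real.tanh x * resM t x := by
  intro t x
  rw [(hasDerivAt_resL_space t x).deriv, (hasDerivAt_resL_time t x).deriv,
    deriv_resM_time, deriv_resM_space]
  constructor <;> simp only [resL, resM] <;> ring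
end

section
/- Let H(x) = tanh(x/√2), λ₀ = i·√(3/2) ∈ ℂ, and fix a sign ε ∈ {+1, −1}. Let φ̃, ψ̃ : ℝ × ℝ → ℂ be C² functions satisfying, for all (t,x), the system ∂_x φ̃ − ∂_t ψ̃ = −(1/√2)·H(x)·φ̃ − ε·λ₀·ψ̃ and ∂_t φ̃ − ∂_x ψ̃ = −(1/√2)·H(x)·ψ̃ − ε·λ₀·φ̃. Then ∂_t² φ̃ − ∂_x² φ̃ + (1 + H(x)²)·φ̃ = 0 (i.e., φ̃_tt + 𝓛̃_H φ̃ = 0) and ∂_t² ψ̃ − ∂_x² ψ̃ + 2·ψ̃ = 0. -/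
/-- The φ⁴ kink. -/
noncomputable def phi4Kink (x : ℝ) : ℝ := Real.tanh (x / Real.sqrt 2)

/-!
Write `a = -H/√2` and `c = ελ₀`, so the system reads `φ_x - ψ_t = aφ - cψ`, `φ_t - ψ_x = aψ - cφ`.
Differentiating the second equation in `t` and the first in `x`, subtracting, and cancelling the
mixed partials of `ψ` (Schwarz) gives `φ_tt - φ_xx = (c² - a² - a')φ` after substituting the system
back in; symmetrically `ψ_tt - ψ_xx = (c² - a² + a')ψ`. For the kink `a² = H²/2`,
`a' = (H² - 1)/2` by `H' = (1 - H²)/√2`, and `c² = -3/2`, so the two coefficients are `-(1 + H²)`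
and `-2`.
-/

open Function

section PartialDerivatives

variable {E : Type*} [NormedAddCommGroup E] [NormedSpace ℝ E]

noncomputable def partialT (f : ℝ → ℝ → E) (t x : ℝ) : E := deriv (fun t' => f t' x) t

noncomputable def partialX (f : ℝ → ℝ → E) (t x : ℝ) : E := deriv (fun x' => f t x') x

theorem hasDerivAt_slice_fst {f : ℝ → ℝ → E} {t x : ℝ}
    (hf : DifferentiableAt ℝ (uncurry f) (t, x)) :
    HasDerivAt (fun t' => f t' x) (fderiv ℝ (uncurry f) (t, x) (1, 0)) t := by
  exact hf.hasFDerivAt.comp_hasDerivAt t ((hasDerivAt_id t).prodMk (hasDerivAt_const t x))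

theorem hasDerivAt_slice_snd {f : ℝ → ℝ → E} {t x : ℝ}
    (hf : DifferentiableAt ℝ (uncurry f) (t, x)) :
    HasDerivAt (fun x' => f t x') (fderiv ℝ (uncurry f) (t, x) (0, 1)) x := by
  exact hf.hasFDerivAt.comp_hasDerivAt x ((hasDerivAt_const x t).prodMk (hasDerivAt_id x))

theorem partialT_eq_fderiv {f : ℝ → ℝ → E} {t x : ℝ}
    (hf : DifferentiableAt ℝ (uncurry f) (t, x)) :
    partialT f t x = fderiv ℝ (uncurry f) (t, x) (1, 0) :=
  (hasDerivAt_slice_fst hf).deriv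

theorem partialX_eq_fderiv {f : ℝ → ℝ → E} {t x : ℝ}
    (hf : DifferentiableAt ℝ (uncurry f) (t, x)) :
    partialX f t x = fderiv ℝ (uncurry f) (t, x) (0, 1) :=
  (hasDerivAt_slice_snd hf).deriv

theorem hasDerivAt_partialT {f : ℝ → ℝ → E} {t x : ℝ}
    (hf : DifferentiableAt ℝ (uncurry f) (t, x)) :
    HasDerivAt (fun t' => f t' x) (partialT f t x) t :=
  partialT_eq_fderiv hf ▸ hasDerivAt_slice_fst hf

theorem hasDerivAt_partialX {f : ℝ → ℝ → E} {t x : ℝ}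
    (hf : DifferentiableAt ℝ (uncurry f) (t, x)) :
    HasDerivAt (fun x' => f t x') (partialX f t x) x :=
  partialX_eq_fderiv hf ▸ hasDerivAt_slice_snd hf

theorem uncurry_partialT {f : ℝ → ℝ → E} (hf : Differentiable ℝ (uncurry f)) :
    uncurry (partialT f) = fun p => fderiv ℝ (uncurry f) p (1, 0) :=
  funext fun p => partialT_eq_fderiv (hf p)

theorem uncurry_partialX {f : ℝ → ℝ → E} (hf : Differentiable ℝ (uncurry f)) :
    uncurry (partialX f) = fun p => fderiv ℝ (uncurry f) p (0, 1) :=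
  funext fun p => partialX_eq_fderiv (hf p)

theorem contDiff_uncurry_partialT {f : ℝ → ℝ → E} {n : ℕ} (hf : ContDiff ℝ (n + 1) (uncurry f)) :
    ContDiff ℝ n (uncurry (partialT f)) := by
  rw [uncurry_partialT (hf.differentiable (by simp))]
  exact (hf.fderiv_right le_rfl).clm_apply contDiff_const

theorem contDiff_uncurry_partialX {f : ℝ → ℝ → E} {n : ℕ} (hf : ContDiff ℝ (n + 1) (uncurry f)) :
    ContDiff ℝ n (uncurry (partialX f)) := by
  rw [uncurry_partialX (hf.differentiable (by simp))]
  exact (hf.fderiv_right le_rfl).clm_apply contDiff_const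

theorem partialT_partialX_comm {f : ℝ → ℝ → E} (hf : ContDiff ℝ 2 (uncurry f))
    (t x : ℝ) : partialT (partialX f) t x = partialX (partialT f) t x := by
  have hd : Differentiable ℝ (fderiv ℝ (uncurry f)) :=
    (hf.fderiv_right le_rfl).differentiable one_ne_zero
  have hT := contDiff_uncurry_partialT (n := 1) hf
  have hX := contDiff_uncurry_partialX (n := 1) hf
  rw [partialT_eq_fderiv (hX.differentiable one_ne_zero _),
    partialX_eq_fderiv (hT.differentiable one_ne_zero _),
    uncurry_partialT (hf.differentiable two_ne_zero),
    uncurry_partialX (hf.differentiable two_ne_zero),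
    fderiv_clm_apply (hd _) (differentiableAt_const _),
    fderiv_clm_apply (hd _) (differentiableAt_const _)]
  simpa using hf.contDiffAt.isSymmSndFDerivAt (by simp) (1, 0) (0, 1)

end PartialDerivatives

section LinearizedBacklund

variable {a a' : ℝ → ℂ} {c : ℂ} {u v w z : ℝ → ℝ → ℂ}

theorem partialT_sub_partialT_of_sub_eq (hu : Differentiable ℝ (uncurry u))
    (hv : Differentiable ℝ (uncurry v)) (hw : Differentiable ℝ (uncurry w))
    (hz : Differentiable ℝ (uncurry z))
    (h : ∀ t x, u t x - v t x = a x * w t x - c * z t x) (t x : ℝ) :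
    partialT u t x - partialT v t x = a x * partialT w t x - c * partialT z t x := by
  have hR := ((hasDerivAt_partialT (hw (t, x))).const_mul (a x)).sub
    ((hasDerivAt_partialT (hz (t, x))).const_mul c)
  exact ((hasDerivAt_partialT (hu (t, x))).sub (hasDerivAt_partialT (hv (t, x)))).unique
    (hR.congr_of_eventuallyEq (.of_forall fun t' => h t' x))

theorem partialX_sub_partialX_of_sub_eq (ha : ∀ x, HasDerivAt a (a' x) x)
    (hu : Differentiable ℝ (uncurry u)) (hv : Differentiable ℝ (uncurry v))
    (hw : Differentiable ℝ (uncurry w)) (hz : Differentiable ℝ (uncurry z))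
    (h : ∀ t x, u t x - v t x = a x * w t x - c * z t x) (t x : ℝ) :
    partialX u t x - partialX v t x
      = a' x * w t x + a x * partialX w t x - c * partialX z t x := by
  have hR := ((ha x).mul (hasDerivAt_partialX (hw (t, x)))).sub
    ((hasDerivAt_partialX (hz (t, x))).const_mul c)
  exact ((hasDerivAt_partialX (hu (t, x))).sub (hasDerivAt_partialX (hv (t, x)))).unique
    (hR.congr_of_eventuallyEq (.of_forall fun x' => h t x'))

variable {φ ψ : ℝ → ℝ → ℂ}

theorem partialT_partialT_sub_partialX_partialX_of_backlund (ha : ∀ x, HasDerivAt a (a' x) x)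
    (hφ : ContDiff ℝ 2 (uncurry φ)) (hψ : ContDiff ℝ 2 (uncurry ψ))
    (h1 : ∀ t x, partialX φ t x - partialT ψ t x = a x * φ t x - c * ψ t x)
    (h2 : ∀ t x, partialT φ t x - partialX ψ t x = a x * ψ t x - c * φ t x) :
    (∀ t x, partialT (partialT φ) t x - partialX (partialX φ) t x
      = (c ^ 2 - a x ^ 2 - a' x) * φ t x) ∧
    (∀ t x, partialT (partialT ψ) t x - partialX (partialX ψ) t x
      = (c ^ 2 - a x ^ 2 + a' x) * ψ t x) := by
  have dφ := hφ.differentiable two_ne_zero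
  have dψ := hψ.differentiable two_ne_zero
  have dTφ := (contDiff_uncurry_partialT (n := 1) hφ).differentiable one_ne_zero
  have dXφ := (contDiff_uncurry_partialX (n := 1) hφ).differentiable one_ne_zero
  have dTψ := (contDiff_uncurry_partialT (n := 1) hψ).differentiable one_ne_zero
  have dXψ := (contDiff_uncurry_partialX (n := 1) hψ).differentiable one_ne_zero
  refine ⟨fun t x => ?_, fun t x => ?_⟩
  · have e2t := partialT_sub_partialT_of_sub_eq dTφ dXψ dψ dφ h2 t x
    have e1x := partialX_sub_partialX_of_sub_eq ha dXφ dTψ dφ dψ h1 t x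
    linear_combination e2t - e1x + partialT_partialX_comm hψ t x - a x * h1 t x - c * h2 t x
  · have e1t := partialT_sub_partialT_of_sub_eq dXφ dTψ dφ dψ h1 t x
    have e2x := partialX_sub_partialX_of_sub_eq ha dTφ dXψ dψ dφ h2 t x
    linear_combination e2x - e1t + partialT_partialX_comm hφ t x - a x * h2 t x - c * h1 t x

end LinearizedBacklund

theorem Real.hasDerivAt_tanh_s17 (x : ℝ) : HasDerivAt Real.tanh (1 - Real.tanh x ^ 2) x := by
  have hcosh := (Real.cosh_pos x).ne'
  refine (((Real.hasDerivAt_sinh x).div (Real.hasDerivAt_cosh x) hcosh).congr_deriv ?_)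
    |>.congr_of_eventuallyEq (.of_forall Real.tanh_eq_sinh_div_cosh)
  rw [Real.tanh_eq_sinh_div_cosh]
  field_simp

theorem hasDerivAt_phi4Kink (x : ℝ) :
    HasDerivAt phi4Kink ((1 - phi4Kink x ^ 2) / Real.sqrt 2) x :=
  ((Real.hasDerivAt_tanh_s17 (x / Real.sqrt 2)).comp x ((hasDerivAt_id x).div_const _)).congr_deriv
    (by rw [phi4Kink]; ring)

theorem ofReal_one_div_sqrt_two_sq : ((1 / Real.sqrt 2 : ℝ) : ℂ) ^ 2 = 1 / 2 := by
  norm_cast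
  rw [div_pow, Real.sq_sqrt zero_le_two, one_pow]
  norm_num

theorem hasDerivAt_neg_inv_sqrt_two_mul_phi4Kink (x : ℝ) :
    HasDerivAt (fun y => -(1 / Real.sqrt 2 : ℝ) * (phi4Kink y : ℂ))
      (((phi4Kink x : ℂ) ^ 2 - 1) / 2) x := by
  refine ((hasDerivAt_phi4Kink x).ofReal_comp.const_mul _).congr_deriv ?_
  rw [div_eq_mul_one_div (1 - _), Complex.ofReal_mul, Complex.ofReal_sub, Complex.ofReal_one,
    Complex.ofReal_pow]
  linear_combination ((phi4Kink x : ℂ) ^ 2 - 1) * ofReal_one_div_sqrt_two_sq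

theorem sq_mul_I_mul_sqrt_three_halves {ε : ℝ} (hε : ε = 1 ∨ ε = -1) :
    ((ε : ℂ) * (Complex.I * (Real.sqrt (3 / 2) : ℂ))) ^ 2 = -3 / 2 := by
  have hε2 : (ε : ℂ) ^ 2 = 1 := by rcases hε with rfl | rfl <;> norm_num
  have hsqrt : ((Real.sqrt (3 / 2) : ℝ) : ℂ) ^ 2 = 3 / 2 := by
    norm_cast
    rw [Real.sq_sqrt (by norm_num)]
    norm_num
  rw [mul_pow, mul_pow, hε2, hsqrt, Complex.I_sq]
  ring

/-- Complex solutions of the second linearized Bäcklund system for φ⁴,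
with lam₀ = i√(3/2), satisfy φ̃_tt + 𝓛̃_H φ̃ = 0 and the free Klein-Gordon equation
ψ̃_tt − ψ̃_xx + 2ψ̃ = 0. -/
theorem second_linearized_backlund_phi4
    (ε : ℝ) (hε : ε = 1 ∨ ε = -1)
    (lam₀ : ℂ) (hlam₀ : lam₀ = Complex.I * (Real.sqrt (3 / 2) : ℂ))
    (φ ψ : ℝ → ℝ → ℂ)
    (hφ : ContDiff ℝ 2 (fun p : ℝ × ℝ => φ p.1 p.2))
    (hψ : ContDiff ℝ 2 (fun p : ℝ × ℝ => ψ p.1 p.2))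
    (h1 : ∀ t x : ℝ,
      deriv (fun x' => φ t x') x - deriv (fun t' => ψ t' x) t
        = -(1 / Real.sqrt 2 : ℝ) * (phi4Kink x : ℂ) * φ t x - (ε : ℂ) * lam₀ * ψ t x)
    (h2 : ∀ t x : ℝ,
      deriv (fun t' => φ t' x) t - deriv (fun x' => ψ t x') x
        = -(1 / Real.sqrt 2 : ℝ) * (phi4Kink x : ℂ) * ψ t x - (ε : ℂ) * lam₀ * φ t x) :
    (∀ t x : ℝ,
      deriv (fun t' => deriv (fun t'' => φ t'' x) t') t
        - deriv (fun x' => deriv (fun x'' => φ t x'') x') x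
        + ((1 + (phi4Kink x) ^ 2 : ℝ) : ℂ) * φ t x = 0)
    ∧ (∀ t x : ℝ,
      deriv (fun t' => deriv (fun t'' => ψ t'' x) t') t
        - deriv (fun x' => deriv (fun x'' => ψ t x'') x') x
        + 2 * ψ t x = 0) := by
  subst hlam₀
  obtain ⟨hφ_wave, hψ_wave⟩ := partialT_partialT_sub_partialX_partialX_of_backlund
    hasDerivAt_neg_inv_sqrt_two_mul_phi4Kink hφ hψ h1 h2
  unfold partialT partialX at hφ_wave hψ_wave
  have hc := sq_mul_I_mul_sqrt_three_halves hε
  have ha_sq (x : ℝ) : (-(1 / Real.sqrt 2 : ℝ) * (phi4Kink x : ℂ)) ^ 2 = (phi4Kink x : ℂ) ^ 2 / 2 := by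
    linear_combination (phi4Kink x : ℂ) ^ 2 * ofReal_one_div_sqrt_two_sq
  refine ⟨fun t x => ?_, fun t x => ?_⟩
  · push_cast
    linear_combination hφ_wave t x + φ t x * (hc - ha_sq x)
  · linear_combination hψ_wave t x + ψ t x * (hc - ha_sq x)
end
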